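/- Assume |a_j| = 1 for all j. The subspace Q_κ is dense in Q_{κ,C} with respect to the Hermitian product ⟨·,·⟩_L: if P ∈ Q_{κ,C} satisfies ⟨P,Q⟩_L = 0 for every Q ∈ Q_κ (with any admissible μ), then P = 0. -/

import Mathlib

/-!
Test `P` against `Q_l = W²·z^l`. These lie in `Q_κ`: `Q_l(e^{ix}) / W(e^{ix}) = W(e^{ix}) e^{ilx}`
is entire and vanishes to order `m` at every `x_j`, so after multiplication by `(x - x_j)^m` it
vanishes to order `2m`, which kills all derivatives of order `< 2m`.
For `|a_j| = 1` we have `Φ† = Φ` and `D† = -D`, hence `W† = ±W`. Thus the zeros of `W` are symmetric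
under `z ↦ 1/z̄`, so none lies on an admissible circle, and the integrand of `⟨P, Q_l⟩_L` reduces to
`±P(z) z^{-l-1}`: the product is `±` the `l`-th coefficient of `P`, which therefore vanishes.
-/

/-- The derivation `D = z·d/dz` on Laurent polynomials: `D(z^m) = m·z^m`. -/
noncomputable def Dop (P : LaurentPolynomial ℂ) : LaurentPolynomial ℂ :=
  Finsupp.sum (AddMonoidAlgebra.coeff P) fun m c => LaurentPolynomial.C ((m : ℂ) * c) * LaurentPolynomial.T m

/-- `Φ_k(a;z) = a·z^k + a⁻¹·z^{−k}`. -/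
noncomputable def PhiL (k : ℕ) (a : ℂ) : LaurentPolynomial ℂ :=
  LaurentPolynomial.C a * LaurentPolynomial.T (k : ℤ) +
    LaurentPolynomial.C a⁻¹ * LaurentPolynomial.T (-(k : ℤ))

/-- `W_{κ,a}`: the determinant of the `n×n` matrix with `(i,j)` entry `D^{i−1}Φ_{k_j}(a_j;z)`. -/
noncomputable def Wka (n : ℕ) (k : Fin n → ℕ) (a : Fin n → ℂ) : LaurentPolynomial ℂ :=
  Matrix.det (Matrix.of fun i j : Fin n => Dop^[(i : ℕ)] (PhiL (k j) (a j)))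

/-- The exceptional Laurent orthogonal polynomial `P_{κ,a;l}`: the determinant of the
`(n+1)×(n+1)` matrix with `(i,j)` entry `D^{i−1}Φ_{k_j}(a_j;z)` for `j ≤ n` and
`D^{i−1}z^l` in the last column. -/
noncomputable def Pka (n : ℕ) (k : Fin n → ℕ) (a : Fin n → ℂ) (l : ℤ) : LaurentPolynomial ℂ :=
  Matrix.det (Matrix.of fun i j : Fin (n + 1) =>
    Fin.lastCases (Dop^[(i : ℕ)] (LaurentPolynomial.T l))
      (fun j' => Dop^[(i : ℕ)] (PhiL (k j') (a j'))) j)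

/-- Evaluation of a Laurent polynomial at `z ∈ ℂ`. -/
noncomputable def evalL (P : LaurentPolynomial ℂ) (z : ℂ) : ℂ :=
  Finsupp.sum (AddMonoidAlgebra.coeff P) fun m c => c * z ^ m

/-- The dagger operation: `(Σ c_m z^m)† = Σ conj(c_m)·z^{−m}`. -/
noncomputable def dag (P : LaurentPolynomial ℂ) : LaurentPolynomial ℂ :=
  Finsupp.sum (AddMonoidAlgebra.coeff P) fun m c => LaurentPolynomial.C ((starRingEnd ℂ) c) * LaurentPolynomial.T (-m)

/-- The set `Z_κ` of zeros of `W_{κ,a}` in `ℂ\{0}`. -/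
def Zka (n : ℕ) (k : Fin n → ℕ) (a : Fin n → ℂ) : Set ℂ :=
  {z | z ≠ 0 ∧ evalL (Wka n k a) z = 0}

/-- The multiplicity of `z₀ ≠ 0` as a zero of the Laurent polynomial `W`, computed as the
root multiplicity of `z₀` in a polynomial representative `f'` with `toLaurent f' = W · T^d`. -/
noncomputable def multL (W : LaurentPolynomial ℂ) (z₀ : ℂ) : ℕ :=
  Polynomial.rootMultiplicity z₀ (W.exists_T_pow).choose_spec.choose

/-- `ψ` is quasi-invariant at `x₀` with multiplicity `m`: `(x−x₀)^m·ψ(x)` extends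
analytically across `x₀` and all its odd-order derivatives of orders `1,3,…,2m−1`
vanish at `x₀`. -/
def QuasiInv (ψ : ℂ → ℂ) (x₀ : ℂ) (m : ℕ) : Prop :=
  ∃ F : ℂ → ℂ, AnalyticAt ℂ F x₀ ∧
    (∀ᶠ x in nhdsWithin x₀ {x₀}ᶜ, F x = (x - x₀) ^ m * ψ x) ∧
    ∀ j : ℕ, 1 ≤ j → j ≤ m → iteratedDeriv (2 * j - 1) F x₀ = 0

/-- `Q_κ`: Laurent polynomials `P` such that `Φ(x) = P(e^{ix})/W_{κ,a}(e^{ix})` is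
quasi-invariant at every point `x_j ∈ ℂ` with `e^{ix_j} ∈ Z_κ`, with the multiplicity of
the corresponding zero. -/
def Qka (n : ℕ) (k : Fin n → ℕ) (a : Fin n → ℂ) : Set (LaurentPolynomial ℂ) :=
  {P | ∀ x₀ : ℂ, Complex.exp (Complex.I * x₀) ∈ Zka n k a →
    QuasiInv (fun x => evalL P (Complex.exp (Complex.I * x)) /
        evalL (Wka n k a) (Complex.exp (Complex.I * x))) x₀
      (multL (Wka n k a) (Complex.exp (Complex.I * x₀)))}

/-- `Q_{κ,C}`: as `Q_κ`, but quasi-invariance is required only at real points `x_j ∈ ℝ`. -/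
def QkaC (n : ℕ) (k : Fin n → ℕ) (a : Fin n → ℂ) : Set (LaurentPolynomial ℂ) :=
  {P | ∀ x₀ : ℝ, Complex.exp (Complex.I * (x₀ : ℂ)) ∈ Zka n k a →
    QuasiInv (fun x => evalL P (Complex.exp (Complex.I * x)) /
        evalL (Wka n k a) (Complex.exp (Complex.I * x))) (x₀ : ℂ)
      (multL (Wka n k a) (Complex.exp (Complex.I * (x₀ : ℂ))))}

/-- `μ > 0` is admissible for the bilinear form if `μ ≠ |z_i|` for every zero `z_i ∈ Z_κ`. -/
def AdmMu (n : ℕ) (k : Fin n → ℕ) (a : Fin n → ℂ) (μ : ℝ) : Prop :=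
  0 < μ ∧ ∀ z ∈ Zka n k a, μ ≠ ‖z‖

/-- The complex bilinear form `(P,Q) = (1/2πi)·∮_{|z|=μ} P(z)·Q(z)·W_{κ,a}(z)^{−2}·dz/z`. -/
noncomputable def formB (n : ℕ) (k : Fin n → ℕ) (a : Fin n → ℂ) (μ : ℝ)
    (P Q : LaurentPolynomial ℂ) : ℂ :=
  (2 * Real.pi * Complex.I)⁻¹ *
    ∮ z in C(0, μ), evalL P z * evalL Q z / ((evalL (Wka n k a) z) ^ 2 * z)

/-- `μ > 0` is admissible for the Hermitian form if `1 < max(μ, 1/μ) < ν`, where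
`ν = min{|z_i| : z_i ∈ Z_κ, |z_i| > 1}` (`ν = +∞` if no such zero exists). -/
def AdmMuH (n : ℕ) (k : Fin n → ℕ) (a : Fin n → ℂ) (μ : ℝ) : Prop :=
  0 < μ ∧ 1 < max μ μ⁻¹ ∧
    ∀ z ∈ Zka n k a, 1 < ‖z‖ → max μ μ⁻¹ < ‖z‖

/-- The sesquilinear product
`⟨P,Q⟩_L = (1/2πi)·∮_{|z|=μ} P(z)·Q†(z)·(W_{κ,a}(z)·W_{κ,a}†(z))⁻¹·dz/z`. -/
noncomputable def formH (n : ℕ) (k : Fin n → ℕ) (a : Fin n → ℂ) (μ : ℝ)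
    (P Q : LaurentPolynomial ℂ) : ℂ :=
  (2 * Real.pi * Complex.I)⁻¹ *
    ∮ z in C(0, μ), evalL P z * evalL (dag Q) z /
      (evalL (Wka n k a) z * evalL (dag (Wka n k a)) z * z)


open LaurentPolynomial

section Evaluation

lemma evalL_add (P Q : LaurentPolynomial ℂ) (z : ℂ) :
    evalL (P + Q) z = evalL P z + evalL Q z :=
  Finsupp.sum_add_index' (by simp) (fun _ _ _ => add_mul _ _ _)

lemma evalL_C_mul_T (c : ℂ) (m : ℤ) (z : ℂ) : evalL (C c * T m) z = c * z ^ m := by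
  rw [← single_eq_C_mul_T]
  exact Finsupp.sum_single_index (zero_mul _)

lemma evalL_eq_eval₂ {z : ℂ} (hz : z ≠ 0) (P : LaurentPolynomial ℂ) :
    evalL P z = eval₂ (RingHom.id ℂ) (Units.mk0 z hz) P := by
  induction P using LaurentPolynomial.induction_on' with
  | add P Q hP hQ => rw [evalL_add, hP, hQ, map_add]
  | C_mul_T m c => simp [evalL_C_mul_T, eval₂_C_mul_T, Units.val_zpow_eq_zpow_val]

lemma evalL_mul {z : ℂ} (hz : z ≠ 0) (P Q : LaurentPolynomial ℂ) :
    evalL (P * Q) z = evalL P z * evalL Q z := by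
  simp only [evalL_eq_eval₂ hz, map_mul]

lemma evalL_C (c z : ℂ) : evalL (C c) z = c := by
  simpa using evalL_C_mul_T c 0 z

lemma evalL_T {z : ℂ} (hz : z ≠ 0) (m : ℤ) : evalL (T m) z = z ^ m := by
  simp [evalL_eq_eval₂ hz, Units.val_zpow_eq_zpow_val]

lemma evalL_toLaurent {z : ℂ} (hz : z ≠ 0) (f : Polynomial ℂ) :
    evalL (Polynomial.toLaurent f) z = f.eval z := by
  simp [evalL_eq_eval₂ hz, Polynomial.eval₂_id]

end Evaluation

section Dagger

lemma dag_add (P Q : LaurentPolynomial ℂ) : dag (P + Q) = dag P + dag Q :=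
  Finsupp.sum_add_index' (by simp) (fun _ _ _ => by rw [map_add, map_add, add_mul])

lemma dag_C_mul_T (c : ℂ) (m : ℤ) : dag (C c * T m) = C (starRingEnd ℂ c) * T (-m) := by
  rw [← single_eq_C_mul_T]
  exact Finsupp.sum_single_index (by simp)

lemma dag_eq_map_invert (P : LaurentPolynomial ℂ) :
    dag P = AddMonoidAlgebra.mapRingHom ℤ (starRingEnd ℂ) (invert P) := by
  induction P using LaurentPolynomial.induction_on' with
  | add P Q hP hQ => rw [dag_add, hP, hQ, map_add, map_add]
  | C_mul_T m c =>
    rw [dag_C_mul_T, map_mul, invert_C, invert_T, map_mul, ← single_eq_C, ← single_eq_C, T,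
      AddMonoidAlgebra.mapRingHom_single, AddMonoidAlgebra.mapRingHom_single, map_one]

noncomputable def dagRingHom : LaurentPolynomial ℂ →+* LaurentPolynomial ℂ :=
  (AddMonoidAlgebra.mapRingHom ℤ (starRingEnd ℂ)).comp invert.toRingHom

lemma dagRingHom_apply (P : LaurentPolynomial ℂ) : dagRingHom P = dag P :=
  (dag_eq_map_invert P).symm

lemma dag_mul (P Q : LaurentPolynomial ℂ) : dag (P * Q) = dag P * dag Q := by
  simp only [← dagRingHom_apply, map_mul]

lemma dag_T (m : ℤ) : dag (T m) = T (-m) := by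
  simpa using dag_C_mul_T 1 m

lemma evalL_dag (z : ℂ) (P : LaurentPolynomial ℂ) :
    evalL (dag P) z = starRingEnd ℂ (evalL P (starRingEnd ℂ z)⁻¹) := by
  induction P using LaurentPolynomial.induction_on' with
  | add P Q hP hQ => rw [dag_add, evalL_add, evalL_add, map_add, hP, hQ]
  | C_mul_T m c =>
    rw [dag_C_mul_T, evalL_C_mul_T, evalL_C_mul_T, map_mul, map_zpow₀, map_inv₀,
      Complex.conj_conj, inv_zpow', zpow_neg]

end Dagger

section Derivation

lemma Dop_add (P Q : LaurentPolynomial ℂ) : Dop (P + Q) = Dop P + Dop Q :=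
  Finsupp.sum_add_index' (by simp) (fun _ _ _ => by rw [mul_add, map_add, add_mul])

lemma Dop_neg (P : LaurentPolynomial ℂ) : Dop (-P) = -Dop P :=
  eq_neg_of_add_eq_zero_left (by rw [← Dop_add, neg_add_cancel]; exact Finsupp.sum_zero_index)

lemma Dop_C_mul_T (c : ℂ) (m : ℤ) : Dop (C c * T m) = C (m * c) * T m := by
  rw [← single_eq_C_mul_T]
  exact Finsupp.sum_single_index (by simp)

lemma iterate_Dop_neg (i : ℕ) (P : LaurentPolynomial ℂ) : Dop^[i] (-P) = -Dop^[i] P :=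
  Function.Commute.iterate_left (g := Neg.neg) Dop_neg i P

lemma dag_Dop (P : LaurentPolynomial ℂ) : dag (Dop P) = -Dop (dag P) := by
  induction P using LaurentPolynomial.induction_on' with
  | add P Q hP hQ => rw [Dop_add, dag_add, hP, hQ, dag_add, Dop_add, neg_add]
  | C_mul_T m c =>
    rw [Dop_C_mul_T, dag_C_mul_T, dag_C_mul_T, Dop_C_mul_T, ← neg_mul, ← map_neg]
    simp

lemma dag_iterate_Dop (i : ℕ) (P : LaurentPolynomial ℂ) :
    dag (Dop^[i] P) = (-1) ^ i * Dop^[i] (dag P) := by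
  induction i generalizing P with
  | zero => simp
  | succ i ih =>
    rw [Function.iterate_succ_apply, ih, dag_Dop, iterate_Dop_neg,
      Function.iterate_succ_apply, pow_succ]
    ring

end Derivation

section Symmetry

lemma dag_PhiL {a : ℂ} (ha : ‖a‖ = 1) (k : ℕ) : dag (PhiL k a) = PhiL k a := by
  rw [PhiL, dag_add, dag_C_mul_T, dag_C_mul_T, map_inv₀ (starRingEnd ℂ) a,
    ← Complex.inv_eq_conj ha, inv_inv, neg_neg, add_comm]

/-- The sign `W_{κ,a}` acquires under `†`: row `i` contributes `(-1)^i` because `D† = -D`. -/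
noncomputable def wronskianSign (n : ℕ) : ℂ := ∏ i : Fin n, (-1) ^ (i : ℕ)

lemma wronskianSign_mul_self (n : ℕ) : wronskianSign n * wronskianSign n = 1 := by
  simp [wronskianSign, ← Finset.prod_mul_distrib, ← pow_add, ← two_mul, pow_mul]

lemma dag_Wka {n : ℕ} (k : Fin n → ℕ) {a : Fin n → ℂ} (ha : ∀ j, ‖a j‖ = 1) :
    dag (Wka n k a) = C (wronskianSign n) * Wka n k a := by
  rw [← dagRingHom_apply, Wka, RingHom.map_det, wronskianSign, map_prod]
  convert Matrix.det_mul_column (fun i : Fin n => (-1 : LaurentPolynomial ℂ) ^ (i : ℕ)) _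
    using 2
  · ext i j
    simp [dagRingHom_apply, dag_iterate_Dop, dag_PhiL (ha j)]
  · simp

variable {n : ℕ} {k : Fin n → ℕ} {a : Fin n → ℂ}

lemma evalL_Wka_conj_inv_eq_zero (ha : ∀ j, ‖a j‖ = 1) {z : ℂ} (hz : z ≠ 0)
    (h : evalL (Wka n k a) z = 0) : evalL (Wka n k a) (starRingEnd ℂ z)⁻¹ = 0 := by
  have hdag := evalL_dag (starRingEnd ℂ z)⁻¹ (Wka n k a)
  rw [map_inv₀, Complex.conj_conj, inv_inv, h, map_zero, dag_Wka k ha,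
    evalL_mul (by simpa using hz), evalL_C] at hdag
  exact (mul_eq_zero.mp hdag).resolve_left (left_ne_zero_of_mul_eq_one (wronskianSign_mul_self n))

lemma evalL_Wka_ne_zero_of_norm_eq {μ : ℝ} (ha : ∀ j, ‖a j‖ = 1) (hμ : AdmMuH n k a μ)
    {z : ℂ} (hz : ‖z‖ = μ) : evalL (Wka n k a) z ≠ 0 := by
  obtain ⟨hμ0, hmax, hzeros⟩ := hμ
  intro h
  have hz0 : z ≠ 0 := by rintro rfl; simp [← hz] at hμ0
  -- the zero of largest modulus among `z` and its reflection `1 / conj z`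
  obtain ⟨w, hw0, hWw, hw⟩ :
      ∃ w : ℂ, w ≠ 0 ∧ evalL (Wka n k a) w = 0 ∧ ‖w‖ = max μ μ⁻¹ := by
    rcases le_total μ 1 with h1 | h1
    · refine ⟨(starRingEnd ℂ z)⁻¹, by simpa using hz0, evalL_Wka_conj_inv_eq_zero ha hz0 h, ?_⟩
      rw [norm_inv, Complex.norm_conj, hz, max_eq_right (h1.trans ((one_le_inv₀ hμ0).2 h1))]
    · exact ⟨z, hz0, h, by rw [hz, max_eq_left ((inv_le_one_of_one_le₀ h1).trans h1)]⟩
  exact (hzeros w ⟨hw0, hWw⟩ (hw ▸ hmax)).ne' hw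

end Symmetry

section Residue

open Complex Metric Set

lemma circleIntegral_zpow {R : ℝ} (hR : R ≠ 0) (m : ℤ) :
    (∮ z in C(0, R), z ^ m) = if m = -1 then 2 * Real.pi * I else 0 := by
  split_ifs with hm
  · simpa [hm] using circleIntegral.integral_sub_center_inv 0 hR
  · simpa using circleIntegral.integral_sub_zpow_of_ne hm 0 0 R

lemma circleIntegral_evalL_mul_zpow {R : ℝ} (hR : 0 < R) (P : LaurentPolynomial ℂ) (l : ℤ) :
    (∮ z in C(0, R), evalL P z * z ^ (-l - 1)) = 2 * Real.pi * I * P.coeff l := by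
  have hexpand : EqOn (fun z => evalL P z * z ^ (-l - 1))
      (fun z => ∑ m ∈ P.coeff.support, P.coeff m * z ^ (m - l - 1)) (sphere 0 R) := by
    intro z hz
    have hz0 : z ≠ 0 := ne_zero_of_mem_sphere hR.ne' ⟨z, hz⟩
    simp only [evalL, Finsupp.sum, Finset.sum_mul, mul_assoc, ← zpow_add₀ hz0]
    exact Finset.sum_congr rfl fun m _ => by ring_nf
  have hint : ∀ m ∈ P.coeff.support,
      CircleIntegrable (fun z => P.coeff m * z ^ (m - l - 1)) 0 R := fun m _ =>
    (continuousOn_const.mul (continuousOn_id.zpow₀ _ fun z hz =>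
      Or.inl (by exact ne_zero_of_mem_sphere hR.ne' ⟨z, hz⟩))).circleIntegrable hR.le
  rw [circleIntegral.integral_congr hR.le hexpand, circleIntegral.integral_fun_sum hint]
  simp only [circleIntegral.integral_const_mul, circleIntegral_zpow hR.ne',
    show ∀ m : ℤ, m - l - 1 = -1 ↔ m = l from fun m => by omega, mul_ite, mul_zero,
    Finset.sum_ite_eq', Finsupp.mem_support_iff]
  split_ifs with hl
  · ring
  · simp [not_not.mp hl]

variable {n : ℕ} {k : Fin n → ℕ} {a : Fin n → ℂ} {μ : ℝ}

lemma formH_Wka_mul_self_mul_T (ha : ∀ j, ‖a j‖ = 1) (hμ : AdmMuH n k a μ)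
    (P : LaurentPolynomial ℂ) (l : ℤ) :
    formH n k a μ P (Wka n k a * Wka n k a * T l) = wronskianSign n * P.coeff l := by
  have hintegrand : EqOn
      (fun z => evalL P z * evalL (dag (Wka n k a * Wka n k a * T l)) z /
        (evalL (Wka n k a) z * evalL (dag (Wka n k a)) z * z))
      (fun z => wronskianSign n * (evalL P z * z ^ (-l - 1))) (sphere 0 μ) := by
    intro z hz
    have hz0 : z ≠ 0 := ne_zero_of_mem_sphere hμ.1.ne' ⟨z, hz⟩
    have hW := evalL_Wka_ne_zero_of_norm_eq ha hμ (mem_sphere_zero_iff_norm.mp hz)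
    simp only [dag_mul, dag_T, dag_Wka k ha, evalL_mul hz0, evalL_C, evalL_T hz0,
      zpow_sub₀ hz0, zpow_neg, zpow_one]
    field_simp
  rw [formH, circleIntegral.integral_congr hμ.1.le hintegrand,
    circleIntegral.integral_const_mul, circleIntegral_evalL_mul_zpow hμ.1]
  field_simp

end Residue

section QuasiInvariance

open Complex

lemma analyticAt_evalL_exp (P : LaurentPolynomial ℂ) (x₀ : ℂ) :
    AnalyticAt ℂ (fun x => evalL P (exp (I * x))) x₀ := by
  refine Differentiable.analyticAt (f := fun x =>
    ∑ m ∈ P.coeff.support, P.coeff m * exp (I * x) ^ m) ?_ x₀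
  fun_prop (disch := exact Or.inl fun _ => exp_ne_zero _)

lemma multL_le_analyticOrderAt (W : LaurentPolynomial ℂ) (x₀ : ℂ) :
    (multL W (exp (I * x₀)) : ℕ∞) ≤ analyticOrderAt (fun x => evalL W (exp (I * x))) x₀ := by
  set d := W.exists_T_pow.choose
  set f := W.exists_T_pow.choose_spec.choose
  have hf : Polynomial.toLaurent f = W * T d := W.exists_T_pow.choose_spec.choose_spec
  set z₀ := exp (I * x₀)
  set m := f.rootMultiplicity z₀
  set g := f /ₘ (Polynomial.X - Polynomial.C z₀) ^ m
  have hfg : (Polynomial.X - Polynomial.C z₀) ^ m * g = f :=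
    Polynomial.pow_mul_divByMonic_rootMultiplicity_eq f z₀
  have hfactor : ∀ x, evalL W (exp (I * x))
      = (exp (I * x) - z₀) ^ m * (g.eval (exp (I * x)) * exp (I * x) ^ (-(d : ℤ))) := by
    intro x
    have hx := exp_ne_zero (I * x)
    have h := congrArg (evalL · (exp (I * x))) hf
    rw [evalL_toLaurent hx, evalL_mul hx, evalL_T hx, ← hfg] at h
    simp only [Polynomial.eval_mul,
      Polynomial.eval_pow, Polynomial.eval_sub, Polynomial.eval_X, Polynomial.eval_C] at h
    rw [zpow_neg, ← mul_assoc, h, mul_inv_cancel_right₀ (zpow_ne_zero _ hx)]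
  have hexp : ((1 : ℕ) : ℕ∞) ≤ analyticOrderAt (fun x => exp (I * x) - z₀) x₀ :=
    Order.one_le_iff_ne_zero.2 (analyticOrderAt_ne_zero.2 ⟨by fun_prop, sub_self _⟩)
  obtain ⟨v, hv, hev⟩ := (natCast_le_analyticOrderAt (by fun_prop)).1 hexp
  change (m : ℕ∞) ≤ _
  refine (natCast_le_analyticOrderAt (analyticAt_evalL_exp W x₀)).2
    ⟨fun x => v x ^ m * (g.eval (exp (I * x)) * exp (I * x) ^ (-(d : ℤ))), ?_, ?_⟩
  · refine hv.pow m |>.mul (Differentiable.analyticAt (f := fun x =>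
      g.eval (exp (I * x)) * exp (I * x) ^ (-(d : ℤ))) ?_ x₀)
    fun_prop (disch := exact Or.inl fun _ => exp_ne_zero _)
  · filter_upwards [hev] with x hx
    rw [hfactor, hx, smul_eq_mul, pow_one, mul_pow, smul_eq_mul, mul_assoc]

lemma quasiInv_mul_self_mul_div (W R : LaurentPolynomial ℂ) (x₀ : ℂ) :
    QuasiInv (fun x => evalL (W * W * R) (exp (I * x)) / evalL W (exp (I * x))) x₀
      (multL W (exp (I * x₀))) := by
  set m := multL W (exp (I * x₀))
  set F := fun x => (x - x₀) ^ m * (evalL W (exp (I * x)) * evalL R (exp (I * x)))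
  have hF : AnalyticAt ℂ F x₀ := ((analyticAt_id.sub analyticAt_const).pow m).mul
    ((analyticAt_evalL_exp W x₀).mul (analyticAt_evalL_exp R x₀))
  refine ⟨F, hF, Filter.Eventually.of_forall fun x => ?_, fun j hj hjm => ?_⟩
  · simp only [F, evalL_mul (exp_ne_zero _)]
    rw [mul_assoc (evalL W _), mul_div_cancel_left_of_imp fun hw => by rw [hw, zero_mul]]
  · -- `W(e^{ix})` already vanishes to order `m` at `x₀`, so `F` vanishes to order `2m`
    have h2m : ((2 * m : ℕ) : ℕ∞) ≤ analyticOrderAt F x₀ := by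
      obtain ⟨h, hh, hev⟩ := (natCast_le_analyticOrderAt (analyticAt_evalL_exp W x₀)).1
        (multL_le_analyticOrderAt W x₀)
      refine (natCast_le_analyticOrderAt hF).2
        ⟨fun x => h x * evalL R (exp (I * x)), hh.mul (analyticAt_evalL_exp R x₀), ?_⟩
      filter_upwards [hev] with x hx
      simp only [F, hx, smul_eq_mul]
      ring
    exact (natCast_le_analyticOrderAt_iff_iteratedDeriv_eq_zero hF).1 h2m _ (by omega)

lemma Wka_mul_self_mul_mem_Qka {n : ℕ} {k : Fin n → ℕ} {a : Fin n → ℂ}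
    (R : LaurentPolynomial ℂ) : Wka n k a * Wka n k a * R ∈ Qka n k a :=
  fun x₀ _ => quasiInv_mul_self_mul_div _ R x₀

end QuasiInvariance

theorem stmt_19_general (n : ℕ) (k : Fin n → ℕ)
    (a : Fin n → ℂ) (ha : ∀ j, ‖a j‖ = 1)
    (P : LaurentPolynomial ℂ) (μ : ℝ) (hμ : AdmMuH n k a μ)
    (horth : ∀ Q ∈ Qka n k a, formH n k a μ P Q = 0) :
    P = 0 := by
  refine LaurentPolynomial.ext fun l => ?_
  have h := horth _ (Wka_mul_self_mul_mem_Qka (T l))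
  rw [formH_Wka_mul_self_mul_T ha hμ] at h
  simpa [left_ne_zero_of_mul_eq_one (wronskianSign_mul_self n)] using h

/-- assuming `|a_j| = 1` for all `j`, the subspace `Q_κ` is dense in
`Q_{κ,C}` with respect to `⟨·,·⟩_L`: if `P ∈ Q_{κ,C}` is orthogonal to every `Q ∈ Q_κ`,
then `P = 0`. -/
theorem stmt_19 (n : ℕ) (k : Fin n → ℕ) (hk : StrictAnti k) (hkpos : ∀ j, 0 < k j)
    (a : Fin n → ℂ) (ha : ∀ j, ‖a j‖ = 1)
    (P : LaurentPolynomial ℂ) (hP : P ∈ QkaC n k a) (μ : ℝ) (hμ : AdmMuH n k a μ)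
    (horth : ∀ Q ∈ Qka n k a, formH n k a μ P Q = 0) :
    P = 0 :=
  stmt_19_general n k a ha P μ hμ horth
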